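/- Fix a seed set S ⊆ V, a set A of added edges disjoint from E, a candidate edge e = ⟨u, v⟩ ∉ E ∪ A with u ∈ S and probability p_{u,v} ∈ [0,1], and λ ∈ [0,1]. Suppose σ̂_1 and σ̂_2 are real numbers satisfying (1 − λ) σ(A, S ∪ {v}) ≤ σ̂_1 ≤ (1 + λ) σ(A, S ∪ {v}) and (1 − λ) σ(A, S) ≤ σ̂_2 ≤ (1 + λ) σ(A, S). Then σ̂ = p_{u,v} σ̂_1 + (1 − p_{u,v}) σ̂_2 satisfies (1 − λ) σ(A ∪ {e}, S) ≤ σ̂ ≤ (1 + λ) σ(A ∪ {e}, S); i.e., σ̂ is a multiplicative λ-error estimate of the augmented influence spread σ(A ∪ {e}, S). -/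

import Mathlib

open scoped Classical

noncomputable section

/-- The set of nodes reachable from some node of `S` via edges of `g`
(every node reaches itself). -/
def Reach {V : Type*} (S : Finset V) (g : Finset (V × V)) : Set V :=
  {x | ∃ s ∈ S, Relation.ReflTransGen (fun a b => (a, b) ∈ g) s x}

/-- Probability of the live-edge graph `g ⊆ F`. -/
def liveProb {V : Type*} [DecidableEq V] (F : Finset (V × V)) (p : V × V → ℝ)
    (g : Finset (V × V)) : ℝ :=
  (∏ e ∈ g, p e) * ∏ e ∈ F \ g, (1 - p e)

/-- The expected spread of the seed set `S` over live-edge graphs of edge set `F`;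
the augmented influence spread is `σ(A, S) = expSpread (E ∪ A) p S`. -/
def expSpread {V : Type*} [DecidableEq V] (F : Finset (V × V)) (p : V × V → ℝ)
    (S : Finset V) : ℝ :=
  ∑ g ∈ F.powerset, liveProb F p g * ((Reach S g).ncard : ℝ)

/-!
Condition on the state of the new edge `(u, v)`. If it is live, then, since `u ∈ S`, the nodes
reachable from `S` are exactly those reachable from `S ∪ {v}` without it; if it is dead, it can be
dropped. Hence `σ(A ∪ {e}, S) = p σ(A, S ∪ {v}) + (1 - p) σ(A, S)`, and a convex combination of
multiplicative `λ`-estimates of the two terms is a multiplicative `λ`-estimate of the sum.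
-/

open Finset

section LiveEdge

variable {V : Type*} [DecidableEq V]

lemma reach_insert_edge_of_mem {S : Finset V} {u : V} (hu : u ∈ S) (v : V)
    (g : Finset (V × V)) :
    Reach S (insert (u, v) g) = Reach (insert v S) g := by
  ext x
  constructor
  · rintro ⟨s, hs, hpath⟩
    induction hpath with
    | refl => exact ⟨s, mem_insert_of_mem hs, .refl⟩
    | tail _ hbc ih =>
      rcases mem_insert.1 hbc with h | h
      · cases h
        exact ⟨v, mem_insert_self _ _, .refl⟩
      · obtain ⟨t, ht, htb⟩ := ih
        exact ⟨t, ht, htb.tail h⟩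
  · rintro ⟨s, hs, hpath⟩
    have hlift : Relation.ReflTransGen (fun a b => (a, b) ∈ insert (u, v) g) s x :=
      Relation.ReflTransGen.mono (fun _ _ => mem_insert_of_mem) _ _ hpath
    rcases mem_insert.1 hs with rfl | hs
    · exact ⟨u, hu, (Relation.ReflTransGen.single (mem_insert_self _ _)).trans hlift⟩
    · exact ⟨s, hs, hlift⟩

variable {F g : Finset (V × V)} {e : V × V} (p : V × V → ℝ)

lemma liveProb_insert_of_notMem (he : e ∉ F) (hg : g ⊆ F) :
    liveProb (insert e F) p g = (1 - p e) * liveProb F p g := by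
  have heg : e ∉ g := fun h => he (hg h)
  unfold liveProb
  rw [insert_sdiff_of_notMem _ heg, prod_insert (fun h => he (sdiff_subset h))]
  ring

lemma liveProb_insert_insert (he : e ∉ F) (hg : g ⊆ F) :
    liveProb (insert e F) p (insert e g) = p e * liveProb F p g := by
  unfold liveProb
  rw [insert_sdiff_insert, sdiff_insert_of_notMem he, prod_insert fun h => he (hg h)]
  ring

lemma expSpread_insert_edge_of_mem {F : Finset (V × V)} {S : Finset V} {u v : V}
    (hu : u ∈ S) (he : (u, v) ∉ F) :
    expSpread (insert (u, v) F) p S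
      = p (u, v) * expSpread F p (insert v S) + (1 - p (u, v)) * expSpread F p S := by
  unfold expSpread
  rw [sum_powerset_insert he, add_comm, mul_sum, mul_sum]
  congr 1 <;> refine sum_congr rfl fun g hg => ?_ <;> rw [mem_powerset] at hg
  · rw [liveProb_insert_insert p he hg, reach_insert_edge_of_mem hu]
    ring
  · rw [liveProb_insert_of_notMem p he hg]
    ring

end LiveEdge

lemma le_convex_combination {c a b x y q : ℝ} (hq0 : 0 ≤ q) (hq1 : q ≤ 1)
    (hx : c * a ≤ x) (hy : c * b ≤ y) :
    c * (q * a + (1 - q) * b) ≤ q * x + (1 - q) * y := by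
  nlinarith [mul_le_mul_of_nonneg_left hx hq0, mul_le_mul_of_nonneg_left hy (sub_nonneg.2 hq1)]

lemma convex_combination_le {c a b x y q : ℝ} (hq0 : 0 ≤ q) (hq1 : q ≤ 1)
    (hx : x ≤ c * a) (hy : y ≤ c * b) :
    q * x + (1 - q) * y ≤ c * (q * a + (1 - q) * b) := by
  nlinarith [mul_le_mul_of_nonneg_left hx hq0, mul_le_mul_of_nonneg_left hy (sub_nonneg.2 hq1)]

theorem combined_estimate_error_general {V : Type*} [DecidableEq V]
    (E A : Finset (V × V)) (p : V × V → ℝ)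
    (hp : ∀ e, 0 ≤ p e ∧ p e ≤ 1)
    (S : Finset V) (u v : V) (hu : u ∈ S) (he : (u, v) ∉ E ∪ A)
    (lam : ℝ)
    (s1 s2 : ℝ)
    (h1l : (1 - lam) * expSpread (E ∪ A) p (insert v S) ≤ s1)
    (h1u : s1 ≤ (1 + lam) * expSpread (E ∪ A) p (insert v S))
    (h2l : (1 - lam) * expSpread (E ∪ A) p S ≤ s2)
    (h2u : s2 ≤ (1 + lam) * expSpread (E ∪ A) p S) :
    (1 - lam) * expSpread (E ∪ (A ∪ {(u, v)})) p S ≤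
        p (u, v) * s1 + (1 - p (u, v)) * s2 ∧
      p (u, v) * s1 + (1 - p (u, v)) * s2 ≤
        (1 + lam) * expSpread (E ∪ (A ∪ {(u, v)})) p S := by
  have hF : E ∪ (A ∪ {(u, v)}) = insert (u, v) (E ∪ A) := by
    rw [← union_assoc, union_comm, singleton_union]
  obtain ⟨hq0, hq1⟩ := hp (u, v)
  rw [hF, expSpread_insert_edge_of_mem p hu he]
  exact ⟨le_convex_combination hq0 hq1 h1l h2l, convex_combination_le hq0 hq1 h1u h2u⟩

/-- If `σ̂₁` and `σ̂₂` are multiplicative `λ`-error estimates of `σ(A, S ∪ {v})` and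
`σ(A, S)` respectively, then `σ̂ = p_{u,v} σ̂₁ + (1 − p_{u,v}) σ̂₂` is a multiplicative
`λ`-error estimate of the augmented influence spread `σ(A ∪ {e}, S)`, where
`e = ⟨u,v⟩ ∉ E ∪ A` and `u ∈ S`. -/
theorem combined_estimate_error {V : Type*} [Fintype V] [DecidableEq V]
    (E A : Finset (V × V)) (p : V × V → ℝ)
    (hp : ∀ e, 0 ≤ p e ∧ p e ≤ 1)
    (hEA : Disjoint E A)
    (S : Finset V) (u v : V) (hu : u ∈ S) (he : (u, v) ∉ E ∪ A)
    (lam : ℝ) (hlam0 : 0 ≤ lam) (hlam1 : lam ≤ 1)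
    (s1 s2 : ℝ)
    (h1l : (1 - lam) * expSpread (E ∪ A) p (insert v S) ≤ s1)
    (h1u : s1 ≤ (1 + lam) * expSpread (E ∪ A) p (insert v S))
    (h2l : (1 - lam) * expSpread (E ∪ A) p S ≤ s2)
    (h2u : s2 ≤ (1 + lam) * expSpread (E ∪ A) p S) :
    (1 - lam) * expSpread (E ∪ (A ∪ {(u, v)})) p S ≤
        p (u, v) * s1 + (1 - p (u, v)) * s2 ∧
      p (u, v) * s1 + (1 - p (u, v)) * s2 ≤
        (1 + lam) * expSpread (E ∪ (A ∪ {(u, v)})) p S :=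
  combined_estimate_error_general E A p hp S u v hu he lam s1 s2 h1l h1u h2l h2u
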